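/- arXiv:2302.14248 — 4 statements merged into one kernel-verified Lean document; each statement's English description precedes it below -/
import Mathlib

section
/- Let (Ω, F, (F_t)_{t∈ℕ}, P) be a filtered probability space and (X_t)_{t≥1} an adapted real-valued process. Fix v ∈ ℝ and λ ∈ ℝ. Let θ_s = E[1_{X_s ≤ v} | F_{s−1}], S_t = Σ_{s≤t} (1_{X_s ≤ v} − θ_s), and h(λ, z) = (1−z)e^{−λz} + z e^{λ(1−z)}. Then the process E_t(λ) = exp(λ S_t − Σ_{s≤t} log h(λ, θ_s)), with E_0(λ) = 1, is a nonnegative martingale with respect to (F_t), and in particular E[E_t(λ)] = 1 for all t. -/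
/-!
Write `I_s = 1_{X_s ≤ v}`. The `s`-th factor `exp (λ (I_s - θ_s) - log h(λ, θ_s))` of `E_t` is
`e^{λ I_s}` times the `ℱ_{s-1}`-measurable quantity `e^{-λ θ_s} / h(λ, θ_s)`. As `I_s ∈ {0, 1}`,
`e^{λ I_s} = 1 + (e^λ - 1) I_s`, whose conditional expectation given `ℱ_{s-1}` is
`1 + θ_s (e^λ - 1) = e^{λ θ_s} h(λ, θ_s)`. So every factor has conditional expectation `1`, and
since the factors are bounded (`θ_s ∈ [0, 1]`), their partial products form a martingale.
-/

open MeasureTheory Filter Set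

noncomputable def bernoulliMGF (lam z : ℝ) : ℝ :=
  (1 - z) * Real.exp (-lam * z) + z * Real.exp (lam * (1 - z))

open Real
open scoped ENNReal

lemma bernoulliMGF_eq_exp_mul (lam z : ℝ) :
    bernoulliMGF lam z = exp (-lam * z) * (1 + z * (exp lam - 1)) := by
  rw [bernoulliMGF, show lam * (1 - z) = lam + -lam * z by ring, exp_add]
  ring

lemma exp_mem_Icc_of_abs_le {x c : ℝ} (h : |x| ≤ c) : exp x ∈ Icc (exp (-c)) (exp c) :=
  ⟨exp_le_exp.2 (abs_le.1 h).1, exp_le_exp.2 (abs_le.1 h).2⟩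

lemma bernoulliMGF_mem_Icc (lam : ℝ) {z : ℝ} (hz : z ∈ Icc (0 : ℝ) 1) :
    bernoulliMGF lam z ∈ Icc (exp (-|lam|)) (exp |lam|) := by
  have hz' : |z| ≤ 1 := abs_le.2 ⟨by linarith [hz.1], hz.2⟩
  have h1z : |1 - z| ≤ 1 := abs_le.2 ⟨by linarith [hz.2], by linarith [hz.1]⟩
  have ha := exp_mem_Icc_of_abs_le (x := -lam * z) (c := |lam|)
    (by rw [abs_mul, abs_neg]; exact mul_le_of_le_one_right (abs_nonneg _) hz')
  have hb := exp_mem_Icc_of_abs_le (x := lam * (1 - z)) (c := |lam|)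
    (by rw [abs_mul]; exact mul_le_of_le_one_right (abs_nonneg _) h1z)
  simpa [bernoulliMGF, smul_eq_mul] using
    convex_Icc _ _ ha hb (sub_nonneg.2 hz.2) hz.1 (sub_add_cancel 1 z)

lemma bernoulliMGF_pos (lam : ℝ) {z : ℝ} (hz : z ∈ Icc (0 : ℝ) 1) : 0 < bernoulliMGF lam z :=
  (exp_pos _).trans_le (bernoulliMGF_mem_Icc lam hz).1

lemma abs_log_bernoulliMGF_le (lam : ℝ) {z : ℝ} (hz : z ∈ Icc (0 : ℝ) 1) :
    |log (bernoulliMGF lam z)| ≤ |lam| := by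
  have hpos := bernoulliMGF_pos lam hz
  exact abs_le.2 ⟨(le_log_iff_exp_le hpos).2 (bernoulliMGF_mem_Icc lam hz).1,
    (log_le_iff_le_exp hpos).2 (bernoulliMGF_mem_Icc lam hz).2⟩

/-- `E_t = ∏_{s ∈ [1, t]} bernoulliTilt lam θ_s I_s`. -/
noncomputable def bernoulliTilt (lam z i : ℝ) : ℝ :=
  exp (lam * (i - z) - log (bernoulliMGF lam z))

lemma bernoulliTilt_eq_exp_mul (lam z i : ℝ) :
    bernoulliTilt lam z i = exp (lam * i) * exp (-lam * z - log (bernoulliMGF lam z)) := by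
  rw [bernoulliTilt, ← exp_add]
  ring_nf

lemma exp_neg_mul_sub_log_bernoulliMGF_mul (lam : ℝ) {z : ℝ} (hz : z ∈ Icc (0 : ℝ) 1) :
    exp (-lam * z - log (bernoulliMGF lam z)) * (1 + z * (exp lam - 1)) = 1 := by
  have hpos := bernoulliMGF_pos lam hz
  rw [exp_sub, exp_log hpos, div_mul_eq_mul_div, ← bernoulliMGF_eq_exp_mul, div_self hpos.ne']

lemma norm_bernoulliTilt_le (lam : ℝ) {z i : ℝ} (hz : z ∈ Icc (0 : ℝ) 1)
    (hi : i ∈ Icc (0 : ℝ) 1) : ‖bernoulliTilt lam z i‖ ≤ exp (2 * |lam|) := by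
  have hiz : |i - z| ≤ 1 := abs_le.2 ⟨by linarith [hi.1, hz.2], by linarith [hi.2, hz.1]⟩
  have hlin : |lam * (i - z)| ≤ |lam| := by
    rw [abs_mul]; exact mul_le_of_le_one_right (abs_nonneg _) hiz
  rw [bernoulliTilt, norm_eq_abs, abs_exp, exp_le_exp]
  linarith [(abs_le.1 hlin).2, (abs_le.1 (abs_log_bernoulliMGF_le lam hz)).1]

@[fun_prop]
lemma Measurable.bernoulliTilt {α : Type*} {_ : MeasurableSpace α} (lam : ℝ) {f g : α → ℝ}
    (hf : Measurable f) (hg : Measurable g) :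
    Measurable fun x => bernoulliTilt lam (f x) (g x) := by
  unfold _root_.bernoulliTilt bernoulliMGF
  fun_prop

lemma indicator_one_mem_Icc {Ω : Type*} (A : Set Ω) (ω : Ω) :
    A.indicator (fun _ => (1 : ℝ)) ω ∈ Icc (0 : ℝ) 1 := by
  by_cases h : ω ∈ A <;> simp [h]

lemma exp_mul_indicator_one {Ω : Type*} (A : Set Ω) (lam : ℝ) :
    (fun ω => exp (lam * A.indicator (fun _ => (1 : ℝ)) ω)) =
      (fun _ => (1 : ℝ)) + (exp lam - 1) • A.indicator (fun _ => (1 : ℝ)) := by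
  ext ω
  by_cases h : ω ∈ A <;> simp [h]

section ConditionalProbability

variable {Ω : Type*} {m m0 : MeasurableSpace Ω} {μ : Measure Ω} [IsFiniteMeasure μ] {A : Set Ω}

lemma condExp_indicator_one_mem_Icc (hm : m ≤ m0) (hA : MeasurableSet A) :
    ∀ᵐ ω ∂μ, μ[A.indicator (fun _ => (1 : ℝ)) | m] ω ∈ Icc (0 : ℝ) 1 := by
  have hle : μ[A.indicator (fun _ => (1 : ℝ)) | m] ≤ᵐ[μ] μ[fun _ => (1 : ℝ) | m] :=
    condExp_mono ((integrable_const 1).indicator hA) (integrable_const 1)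
      (ae_of_all _ fun ω => (indicator_one_mem_Icc A ω).2)
  rw [condExp_const hm] at hle
  filter_upwards [condExp_nonneg (ae_of_all μ fun ω => (indicator_one_mem_Icc A ω).1), hle]
    with ω h0 h1 using ⟨h0, h1⟩

lemma condExp_exp_mul_indicator_one (hm : m ≤ m0) (hA : MeasurableSet A) (lam : ℝ) :
    μ[fun ω => exp (lam * A.indicator (fun _ => (1 : ℝ)) ω) | m] =ᵐ[μ]
      fun ω => 1 + μ[A.indicator (fun _ => (1 : ℝ)) | m] ω * (exp lam - 1) := by
  rw [exp_mul_indicator_one]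
  filter_upwards [condExp_add (integrable_const (1 : ℝ))
      (((integrable_const 1).indicator hA).smul (exp lam - 1)) m,
    condExp_smul (m := m) (μ := μ) (exp lam - 1) (A.indicator fun _ => (1 : ℝ))] with ω hadd hsmul
  rw [hadd, Pi.add_apply, hsmul, condExp_const hm, Pi.smul_apply, smul_eq_mul, mul_comm]

lemma memLp_top_bernoulliTilt_indicator_one (hm : m ≤ m0) (hA : MeasurableSet A) (lam : ℝ) :
    MemLp (fun ω => bernoulliTilt lam (μ[A.indicator (fun _ => (1 : ℝ)) | m] ω)
      (A.indicator (fun _ => (1 : ℝ)) ω)) ∞ μ := by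
  have hθ : Measurable (μ[A.indicator (fun _ => (1 : ℝ)) | m]) :=
    stronglyMeasurable_condExp.measurable.mono hm le_rfl
  have hI : Measurable (A.indicator fun _ => (1 : ℝ)) := measurable_const.indicator hA
  refine memLp_top_of_bound (hθ.bernoulliTilt lam hI).aestronglyMeasurable (exp (2 * |lam|)) ?_
  filter_upwards [condExp_indicator_one_mem_Icc hm hA] with ω hω
  exact norm_bernoulliTilt_le lam hω (indicator_one_mem_Icc A ω)

lemma condExp_bernoulliTilt_indicator_one (hm : m ≤ m0) (hA : MeasurableSet A) (lam : ℝ) :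
    μ[fun ω => bernoulliTilt lam (μ[A.indicator (fun _ => (1 : ℝ)) | m] ω)
      (A.indicator (fun _ => (1 : ℝ)) ω) | m] =ᵐ[μ] 1 := by
  set θ := μ[A.indicator (fun _ => (1 : ℝ)) | m]
  set G : Ω → ℝ := fun ω => exp (-lam * θ ω - log (bernoulliMGF lam (θ ω)))
  have hG : StronglyMeasurable[m] G := by
    have hθ : Measurable[m] θ := stronglyMeasurable_condExp.measurable
    exact (by unfold G bernoulliMGF; fun_prop : Measurable[m] G).stronglyMeasurable
  have hsplit : (fun ω => bernoulliTilt lam (θ ω) (A.indicator (fun _ => (1 : ℝ)) ω)) =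
      G * fun ω => exp (lam * A.indicator (fun _ => (1 : ℝ)) ω) := by
    ext ω
    rw [bernoulliTilt_eq_exp_mul, mul_comm, Pi.mul_apply]
  have hF : Integrable (fun ω => exp (lam * A.indicator (fun _ => (1 : ℝ)) ω)) μ := by
    rw [exp_mul_indicator_one]
    exact (integrable_const 1).add (((integrable_const 1).indicator hA).smul _)
  have hGF : Integrable (G * fun ω => exp (lam * A.indicator (fun _ => (1 : ℝ)) ω)) μ :=
    hsplit ▸ (memLp_top_bernoulliTilt_indicator_one hm hA lam).integrable le_top
  rw [hsplit]
  filter_upwards [condExp_mul_of_stronglyMeasurable_left hG hGF hF,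
    condExp_exp_mul_indicator_one hm hA lam, condExp_indicator_one_mem_Icc hm hA]
    with ω hpull hexp hθ
  rw [hpull, Pi.mul_apply, hexp, Pi.one_apply]
  exact exp_neg_mul_sub_log_bernoulliMGF_mul lam hθ

end ConditionalProbability

section ProductMartingale

variable {Ω : Type*} {m0 : MeasurableSpace Ω} {μ : Measure Ω} [IsFiniteMeasure μ]
  {ℱ : Filtration ℕ m0}

theorem martingale_prod_Icc {r : ℕ → Ω → ℝ} (hr : Adapted ℱ r) (hbdd : ∀ s, MemLp (r s) ∞ μ)
    (hcond : ∀ t, μ[r (t + 1) | ℱ t] =ᵐ[μ] 1) :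
    Martingale (fun t ω => ∏ s ∈ Finset.Icc 1 t, r s ω) ℱ μ := by
  set P : ℕ → Ω → ℝ := fun t ω => ∏ s ∈ Finset.Icc 1 t, r s ω
  have hP : Adapted ℱ P := fun t => Finset.measurable_prod _ fun s hs =>
    (hr s).mono (ℱ.mono (Finset.mem_Icc.1 hs).2) le_rfl
  have hPint : ∀ t, Integrable (P t) μ := fun t =>
    (by simpa using MemLp.prod' (p := fun _ => ∞) fun s _ => hbdd s : MemLp (P t) ∞ μ).integrable
      le_top
  have hsucc : ∀ t, P (t + 1) = P t * r (t + 1) := fun t =>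
    funext fun _ => Finset.prod_Icc_succ_top (by omega) _
  refine martingale_nat hP.stronglyAdapted hPint fun t => ?_
  filter_upwards [condExp_mul_of_stronglyMeasurable_left (hP t).stronglyMeasurable
      (hsucc t ▸ hPint (t + 1)) ((hbdd (t + 1)).integrable le_top), hcond t] with ω hpull hone
  rw [hsucc, hpull, Pi.mul_apply, hone, Pi.one_apply, mul_one]

theorem martingale_prod_bernoulliTilt {A : ℕ → Set Ω} (hA : ∀ s, MeasurableSet[ℱ s] (A s))
    (lam : ℝ) :
    Martingale (fun t ω => ∏ s ∈ Finset.Icc 1 t,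
      bernoulliTilt lam (μ[(A s).indicator (fun _ => (1 : ℝ)) | ℱ (s - 1)] ω)
        ((A s).indicator (fun _ => (1 : ℝ)) ω)) ℱ μ := by
  refine martingale_prod_Icc (fun s => ?_)
    (fun s => memLp_top_bernoulliTilt_indicator_one (ℱ.le _) (ℱ.le s _ (hA s)) lam) fun t => ?_
  · have hθ : Measurable[ℱ s] (μ[(A s).indicator (fun _ => (1 : ℝ)) | ℱ (s - 1)]) :=
      stronglyMeasurable_condExp.measurable.mono (ℱ.mono (Nat.sub_le s 1)) le_rfl
    exact hθ.bernoulliTilt lam (measurable_const.indicator (hA s))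
  · simpa only [Nat.add_sub_cancel] using
      condExp_bernoulliTilt_indicator_one (ℱ.le t) (ℱ.le (t + 1) _ (hA (t + 1))) lam

end ProductMartingale

/-- the test martingale, equation (3) of the paper.  For an adapted
real-valued process `X`, fixed `v lam : ℝ`, `θ s = E[1_{X s ≤ v} | ℱ (s-1)]` and
`S t = ∑_{s ≤ t} (1_{X s ≤ v} - θ s)`, the process
`E t = exp (lam * S t - ∑_{s ≤ t} log (h lam (θ s)))` (with `E 0 = 1`) is a nonnegative
martingale with respect to `ℱ`; in particular `E[E t] = 1` for all `t`. -/
theorem test_martingale {Ω : Type*} {m0 : MeasurableSpace Ω} (μ : Measure Ω)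
    [IsProbabilityMeasure μ] (ℱ : Filtration ℕ m0) (X : ℕ → Ω → ℝ) (hX : Adapted ℱ X)
    (v lam : ℝ)
    (θ : ℕ → Ω → ℝ)
    (hθ : ∀ s, θ s = μ[Set.indicator {ω' | X s ω' ≤ v} (fun _ => (1 : ℝ)) | ℱ (s - 1)])
    (E : ℕ → Ω → ℝ)
    (hE : ∀ t ω, E t ω =
      Real.exp (lam * (∑ s ∈ Finset.Icc 1 t,
          (Set.indicator {ω' | X s ω' ≤ v} (fun _ => (1 : ℝ)) ω - θ s ω)) -
        ∑ s ∈ Finset.Icc 1 t, Real.log (bernoulliMGF lam (θ s ω)))) :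
    Martingale E ℱ μ ∧ (∀ t ω, 0 ≤ E t ω) ∧ (∀ ω, E 0 ω = 1) ∧
      (∀ t, ∫ ω, E t ω ∂μ = 1) := by
  have hE_prod : E = fun t ω => ∏ s ∈ Finset.Icc 1 t,
      bernoulliTilt lam (θ s ω) ({ω' | X s ω' ≤ v}.indicator (fun _ => (1 : ℝ)) ω) := by
    ext t ω
    rw [hE, Finset.mul_sum, ← Finset.sum_sub_distrib, exp_sum]
    rfl
  have hmart : Martingale E ℱ μ := by
    simpa only [hE_prod, hθ] using
      martingale_prod_bernoulliTilt (μ := μ) (fun s => measurableSet_le (hX s) measurable_const) lam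
  have hE0 : ∀ ω, E 0 ω = 1 := fun ω => by simp [hE]
  refine ⟨hmart, fun t ω => hE t ω ▸ (exp_pos _).le, hE0, fun t => ?_⟩
  rw [← setIntegral_univ, ← hmart.setIntegral_eq (Nat.zero_le t) MeasurableSet.univ]
  simp [hE0]
end

section
/- Let λ ∈ ℝ, t ≥ 1, and θ_1, ..., θ_t ∈ [0,1] with q = (1/t) Σ_{s≤t} θ_s. Then Σ_{s≤t} log h(λ, θ_s) ≤ t · log h(λ, q), where h(λ, z) = (1−z)e^{−λz} + z e^{λ(1−z)}. Consequently, exp(λ S − Σ_{s≤t} log h(λ, θ_s)) ≥ exp(λ S − t · log h(λ, q)) for every real S. -/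
/-!
Writing `h(λ, z) = e^{-λz} ((1 - z) + z e^λ)`, the function `z ↦ log h(λ, z)` is a linear
function plus the logarithm of an affine one, hence concave on `[0, 1]`. Jensen's inequality
for the uniform weights `1/t` then bounds `∑ log h(λ, θ_s)` by `t · log h(λ, q)`, and the bound
on the exponentials follows by monotonicity of `exp`.
-/

open Finset Set Real

theorem ConcaveOn.sum_le_card_smul_map_average {𝕜 E β ι : Type*} [Field 𝕜] [LinearOrder 𝕜]
    [IsStrictOrderedRing 𝕜] [AddCommGroup E] [AddCommGroup β] [PartialOrder β]
    [IsOrderedAddMonoid β] [Module 𝕜 E] [Module 𝕜 β] [IsStrictOrderedModule 𝕜 β]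
    {s : Set E} {f : E → β} (hf : ConcaveOn 𝕜 s f) {t : Finset ι} {p : ι → E}
    (hmem : ∀ i ∈ t, p i ∈ s) :
    ∑ i ∈ t, f (p i) ≤ (#t : 𝕜) • f ((#t : 𝕜)⁻¹ • ∑ i ∈ t, p i) := by
  rcases t.eq_empty_or_nonempty with rfl | ht
  · simp
  have hcard : (0 : 𝕜) < #t := by exact_mod_cast ht.card_pos
  have jensen := hf.le_map_sum (w := fun _ ↦ (#t : 𝕜)⁻¹) (fun _ _ ↦ by positivity)
    (by simp [hcard.ne']) hmem
  rw [← Finset.smul_sum, ← Finset.smul_sum] at jensen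
  calc ∑ i ∈ t, f (p i) = (#t : 𝕜) • (#t : 𝕜)⁻¹ • ∑ i ∈ t, f (p i) := by
        rw [smul_inv_smul₀ hcard.ne']
    _ ≤ _ := smul_le_smul_of_nonneg_left jensen hcard.le

theorem bernoulliMGF_eq_exp_mul_lineMap (lam z : ℝ) :
    bernoulliMGF lam z = exp (-lam * z) * AffineMap.lineMap 1 (exp lam) z := by
  rw [bernoulliMGF, AffineMap.lineMap_apply_ring, show lam * (1 - z) = lam + -lam * z by ring,
    exp_add]
  ring

theorem lineMap_one_exp_pos (lam : ℝ) {z : ℝ} (hz : z ∈ Set.Icc (0 : ℝ) 1) :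
    0 < AffineMap.lineMap 1 (exp lam) z :=
  (convex_Ioi (0 : ℝ)).lineMap_mem (mem_Ioi.2 one_pos) (exp_pos lam) hz

theorem log_bernoulliMGF (lam : ℝ) {z : ℝ} (hz : z ∈ Set.Icc (0 : ℝ) 1) :
    log (bernoulliMGF lam z) = -lam * z + log (AffineMap.lineMap 1 (exp lam) z) := by
  rw [bernoulliMGF_eq_exp_mul_lineMap, log_mul (exp_ne_zero _) (lineMap_one_exp_pos lam hz).ne',
    log_exp]

theorem concaveOn_log_bernoulliMGF (lam : ℝ) :
    ConcaveOn ℝ (Set.Icc (0 : ℝ) 1) (fun z ↦ log (bernoulliMGF lam z)) := by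
  have hlinear : ConcaveOn ℝ (Set.Icc (0 : ℝ) 1) (fun z : ℝ ↦ -lam * z) :=
    (LinearMap.mul ℝ ℝ (-lam)).concaveOn (convex_Icc 0 1)
  have hlog : ConcaveOn ℝ (Set.Icc (0 : ℝ) 1) (log ∘ AffineMap.lineMap 1 (exp lam)) :=
    (strictConcaveOn_log_Ioi.concaveOn.comp_affineMap _).subset
      (fun _ hz ↦ lineMap_one_exp_pos lam hz) (convex_Icc 0 1)
  exact (hlinear.add hlog).congr fun z hz ↦ (log_bernoulliMGF lam hz).symm

theorem log_mgf_sum_le_general (lam : ℝ) (t : ℕ) (θ : ℕ → ℝ)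
    (hθ : ∀ s ∈ Finset.Icc 1 t, θ s ∈ Set.Icc (0 : ℝ) 1)
    (q : ℝ) (hq : q = (t : ℝ)⁻¹ * ∑ s ∈ Finset.Icc 1 t, θ s) :
    (∑ s ∈ Finset.Icc 1 t, Real.log (bernoulliMGF lam (θ s)) ≤
        (t : ℝ) * Real.log (bernoulliMGF lam q)) ∧
      ∀ S : ℝ,
        Real.exp (lam * S - (t : ℝ) * Real.log (bernoulliMGF lam q)) ≤
          Real.exp (lam * S - ∑ s ∈ Finset.Icc 1 t, Real.log (bernoulliMGF lam (θ s))) := by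
  have jensen := (concaveOn_log_bernoulliMGF lam).sum_le_card_smul_map_average hθ
  rw [Nat.card_Icc, Nat.add_sub_cancel, smul_eq_mul, smul_eq_mul, ← hq] at jensen
  exact ⟨jensen, fun S ↦ exp_le_exp.mpr (by linarith)⟩

/-- equation (binmartlb) of the paper.  For `lam : ℝ`, `t ≥ 1` and
`θ 1, …, θ t ∈ [0, 1]` with average `q = (1/t) ∑_{s ≤ t} θ s`, one has
`∑_{s ≤ t} log (h lam (θ s)) ≤ t * log (h lam q)`; consequently
`exp (lam * S - ∑_{s ≤ t} log (h lam (θ s))) ≥ exp (lam * S - t * log (h lam q))`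
for every real `S`. -/
theorem log_mgf_sum_le (lam : ℝ) (t : ℕ) (ht : 1 ≤ t) (θ : ℕ → ℝ)
    (hθ : ∀ s ∈ Finset.Icc 1 t, θ s ∈ Set.Icc (0 : ℝ) 1)
    (q : ℝ) (hq : q = (t : ℝ)⁻¹ * ∑ s ∈ Finset.Icc 1 t, θ s) :
    (∑ s ∈ Finset.Icc 1 t, Real.log (bernoulliMGF lam (θ s)) ≤
        (t : ℝ) * Real.log (bernoulliMGF lam q)) ∧
      ∀ S : ℝ,
        Real.exp (lam * S - (t : ℝ) * Real.log (bernoulliMGF lam q)) ≤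
          Real.exp (lam * S - ∑ s ∈ Finset.Icc 1 t, Real.log (bernoulliMGF lam (θ s))) :=
  log_mgf_sum_le_general lam t θ hθ q hq
end

section
/- (Kearns–Saul inequality, used to establish the sub-Gaussian property in Theorem 3.2.) For every p ∈ (0,1) and every λ ∈ ℝ, (1−p)e^{−λp} + p e^{λ(1−p)} ≤ exp(λ² K(p) / 2), where K(p) = (2p−1) / (2 log(p/(1−p))) for p ≠ 1/2 and K(1/2) = 1/4. -/
/-!
Write `q = 1 - p` and `ψ(y) = log (q + p e^y) - p y`, so that the left-hand side is `exp ψ(λ)`.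
For `p ≤ 1/2` consider `f(y) = K y² / 2 - ψ(y)`. Its second derivative is `K - u (1 - u)`, where
`u(y) = p e^y / (q + p e^y)` increases from `0` to `1`, so `f` is convex, concave, convex on three
consecutive intervals, cut where `u` crosses the roots `a ≤ 1 - a` of `v (1 - v) = K`. Since `2K`
is the logarithmic mean of `p` and `q`, it lies between their harmonic mean `2pq` and arithmetic
mean `1/2`; thus `p ≤ a`, so the critical point `0` of `f` lies in the first interval and the
critical point `2 log (q / p)` in the last. As `f` vanishes at both, it is nonnegative on the outer
intervals, and, being concave in between, on the middle one too. The case `p > 1/2` follows from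
`ψ_{1-p}(-y) = ψ_p(y)`.
-/

/-- The Kearns–Saul variance factor `K p = (2p - 1) / (2 log (p / (1 - p)))` for `p ≠ 1/2`,
extended by continuity to `K (1/2) = 1/4`. -/
noncomputable def kearnsSaul (p : ℝ) : ℝ :=
  if p = 1 / 2 then 1 / 4 else (2 * p - 1) / (2 * Real.log (p / (1 - p)))

open Real Set

section Calculus

variable {f f' : ℝ → ℝ}

theorem monotoneOn_of_hasDerivAt_nonneg {s : Set ℝ} (hs : Convex ℝ s)
    (hf : ∀ x ∈ s, HasDerivAt f (f' x) x) (hf' : ∀ x ∈ s, 0 ≤ f' x) : MonotoneOn f s :=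
  monotoneOn_of_hasDerivWithinAt_nonneg hs (fun x hx ↦ (hf x hx).continuousAt.continuousWithinAt)
    (fun x hx ↦ (hf x (interior_subset hx)).hasDerivWithinAt)
    fun x hx ↦ hf' x (interior_subset hx)

theorem antitoneOn_of_hasDerivAt_nonpos {s : Set ℝ} (hs : Convex ℝ s)
    (hf : ∀ x ∈ s, HasDerivAt f (f' x) x) (hf' : ∀ x ∈ s, f' x ≤ 0) : AntitoneOn f s :=
  antitoneOn_of_hasDerivWithinAt_nonpos hs (fun x hx ↦ (hf x hx).continuousAt.continuousWithinAt)
    (fun x hx ↦ (hf x (interior_subset hx)).hasDerivWithinAt)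
    fun x hx ↦ hf' x (interior_subset hx)

theorem isMinOn_of_hasDerivAt_of_monotoneOn {s : Set ℝ} (hs : s.OrdConnected)
    (hf : ∀ x, HasDerivAt f (f' x) x) (hf' : MonotoneOn f' s) {c : ℝ} (hc : c ∈ s)
    (hfc : f' c = 0) : IsMinOn f s c := by
  intro x hx
  rcases le_total c x with hcx | hxc
  · exact monotoneOn_of_hasDerivAt_nonneg (convex_Icc c x) (fun y _ ↦ hf y)
      (fun y hy ↦ hfc ▸ hf' hc (hs.out hc hx hy) hy.1) ⟨le_rfl, hcx⟩ ⟨hcx, le_rfl⟩ hcx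
  · exact antitoneOn_of_hasDerivAt_nonpos (convex_Icc x c) (fun y _ ↦ hf y)
      (fun y hy ↦ hfc ▸ hf' (hs.out hx hc hy) hc hy.2) ⟨le_rfl, hxc⟩ ⟨hxc, le_rfl⟩ hxc

theorem min_le_of_hasDerivAt_of_antitoneOn (hf : ∀ x, HasDerivAt f (f' x) x) {a b : ℝ}
    (hf' : AntitoneOn f' (Icc a b)) {x : ℝ} (hx : x ∈ Icc a b) : min (f a) (f b) ≤ f x := by
  rcases le_total 0 (f' x) with hfx | hfx
  · refine min_le_of_left_le <| monotoneOn_of_hasDerivAt_nonneg (convex_Icc a x)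
      (fun y _ ↦ hf y) (fun y hy ↦ hfx.trans (hf' ⟨hy.1, hy.2.trans hx.2⟩ hx hy.2))
      ⟨le_rfl, hx.1⟩ ⟨hx.1, le_rfl⟩ hx.1
  · refine min_le_of_right_le <| antitoneOn_of_hasDerivAt_nonpos (convex_Icc x b)
      (fun y _ ↦ hf y) (fun y hy ↦ (hf' hx ⟨hx.1.trans hy.1, hy.2⟩ hy.1).trans hfx)
      ⟨le_rfl, hx.2⟩ ⟨hx.2, le_rfl⟩ hx.2

theorem nonneg_of_hasDerivAt_of_monotoneOn_antitoneOn_monotoneOn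
    (hf : ∀ x, HasDerivAt f (f' x) x) {x₀ a b x₁ : ℝ} (hx₀ : x₀ ≤ a) (hx₁ : b ≤ x₁)
    (h₁ : MonotoneOn f' (Iic a)) (h₂ : AntitoneOn f' (Icc a b)) (h₃ : MonotoneOn f' (Ici b))
    (hf₀ : 0 ≤ f x₀) (hf'₀ : f' x₀ = 0) (hf₁ : 0 ≤ f x₁) (hf'₁ : f' x₁ = 0) (x : ℝ) :
    0 ≤ f x := by
  have hle : ∀ y ≤ a, 0 ≤ f y := fun y hy ↦
    hf₀.trans (isMinOn_of_hasDerivAt_of_monotoneOn ordConnected_Iic hf h₁ hx₀ hf'₀ hy)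
  have hge : ∀ y, b ≤ y → 0 ≤ f y := fun y hy ↦
    hf₁.trans (isMinOn_of_hasDerivAt_of_monotoneOn ordConnected_Ici hf h₃ hx₁ hf'₁ hy)
  rcases le_total x a with hxa | hax
  · exact hle x hxa
  rcases le_total b x with hbx | hxb
  · exact hge x hbx
  exact (le_min (hle a le_rfl) (hge b le_rfl)).trans
    (min_le_of_hasDerivAt_of_antitoneOn hf h₂ ⟨hax, hxb⟩)

end Calculus

noncomputable def centeredBernoulliCGF (p y : ℝ) : ℝ := log (1 - p + p * exp y) - p * y

noncomputable def tiltedMean (p y : ℝ) : ℝ := p * exp y / (1 - p + p * exp y)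

section Bernoulli

variable {p : ℝ}

theorem one_sub_add_mul_exp_pos (hp0 : 0 ≤ p) (hp1 : p < 1) (y : ℝ) : 0 < 1 - p + p * exp y :=
  add_pos_of_pos_of_nonneg (sub_pos.2 hp1) (mul_nonneg hp0 (exp_pos y).le)

theorem exp_centeredBernoulliCGF (hp0 : 0 ≤ p) (hp1 : p < 1) (y : ℝ) :
    exp (centeredBernoulliCGF p y) = (1 - p) * exp (-y * p) + p * exp (y * (1 - p)) := by
  rw [centeredBernoulliCGF, exp_sub, exp_log (one_sub_add_mul_exp_pos hp0 hp1 y), div_eq_mul_inv,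
    ← exp_neg, add_mul, mul_assoc, ← exp_add]
  ring_nf

theorem centeredBernoulliCGF_one_sub (hp0 : 0 ≤ p) (hp1 : p < 1) (y : ℝ) :
    centeredBernoulliCGF (1 - p) (-y) = centeredBernoulliCGF p y := by
  have h : 1 - (1 - p) + (1 - p) * exp (-y) = exp (-y) * (1 - p + p * exp y) := by
    rw [exp_neg]; field_simp; ring
  rw [centeredBernoulliCGF, centeredBernoulliCGF, h,
    log_mul (exp_pos _).ne' (one_sub_add_mul_exp_pos hp0 hp1 y).ne', log_exp]
  ring

theorem centeredBernoulliCGF_zero (p : ℝ) : centeredBernoulliCGF p 0 = 0 := by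
  simp [centeredBernoulliCGF]

theorem tiltedMean_zero (p : ℝ) : tiltedMean p 0 = p := by
  simp [tiltedMean]

theorem hasDerivAt_centeredBernoulliCGF (hp0 : 0 ≤ p) (hp1 : p < 1) (y : ℝ) :
    HasDerivAt (centeredBernoulliCGF p) (tiltedMean p y - p) y := by
  have hexp : HasDerivAt (fun t ↦ 1 - p + p * exp t) (p * exp y) y :=
    ((hasDerivAt_exp y).const_mul p).const_add _
  refine ((hexp.log (one_sub_add_mul_exp_pos hp0 hp1 y).ne').sub
    ((hasDerivAt_id y).const_mul p)).congr_deriv ?_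
  rw [tiltedMean, mul_one]

theorem hasDerivAt_tiltedMean (hp0 : 0 ≤ p) (hp1 : p < 1) (y : ℝ) :
    HasDerivAt (tiltedMean p) (tiltedMean p y * (1 - tiltedMean p y)) y := by
  have hpos := one_sub_add_mul_exp_pos hp0 hp1 y
  have hnum : HasDerivAt (fun t ↦ p * exp t) (p * exp y) y := (hasDerivAt_exp y).const_mul p
  refine (hnum.div (hnum.const_add (1 - p)) hpos.ne').congr_deriv ?_
  rw [tiltedMean]
  field_simp

theorem strictMono_tiltedMean (hp0 : 0 < p) (hp1 : p < 1) : StrictMono (tiltedMean p) := by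
  intro a b hab
  rw [tiltedMean, tiltedMean, div_lt_div_iff₀ (one_sub_add_mul_exp_pos hp0.le hp1 a)
    (one_sub_add_mul_exp_pos hp0.le hp1 b)]
  nlinarith [mul_lt_mul_of_pos_left (exp_lt_exp.2 hab) (mul_pos hp0 (sub_pos.2 hp1))]

theorem tiltedMean_log (hp0 : 0 < p) (hp1 : p < 1) {v : ℝ} (hv0 : 0 < v) (hv1 : v < 1) :
    tiltedMean p (log ((1 - p) * v / (p * (1 - v)))) = v := by
  have hq : 0 < 1 - p := sub_pos.2 hp1
  have hw : 0 < 1 - v := sub_pos.2 hv1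
  rw [tiltedMean, exp_log (by positivity)]
  field_simp
  ring

theorem exp_two_mul_log_one_sub_div (hp0 : 0 < p) (hp1 : p < 1) :
    exp (2 * log ((1 - p) / p)) = ((1 - p) / p) ^ 2 := by
  rw [two_mul, exp_add, exp_log (div_pos (sub_pos.2 hp1) hp0), sq]

theorem tiltedMean_two_mul_log (hp0 : 0 < p) (hp1 : p < 1) :
    tiltedMean p (2 * log ((1 - p) / p)) = 1 - p := by
  have hq : 0 < 1 - p := sub_pos.2 hp1
  rw [tiltedMean, exp_two_mul_log_one_sub_div hp0 hp1]
  field_simp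
  ring

theorem centeredBernoulliCGF_two_mul_log (hp0 : 0 < p) (hp1 : p < 1) :
    centeredBernoulliCGF p (2 * log ((1 - p) / p)) = (1 - 2 * p) * log ((1 - p) / p) := by
  have hq : 0 < 1 - p := sub_pos.2 hp1
  have h : 1 - p + p * ((1 - p) / p) ^ 2 = (1 - p) / p := by field_simp; ring
  rw [centeredBernoulliCGF, exp_two_mul_log_one_sub_div hp0 hp1, h]
  ring

end Bernoulli

theorem exists_le_mul_one_sub_eq {p K : ℝ} (hp : p ≤ 1 / 2) (hK₁ : p * (1 - p) ≤ K)
    (hK₂ : K ≤ 1 / 4) : ∃ a, p ≤ a ∧ a ≤ 1 / 2 ∧ a * (1 - a) = K := by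
  have hsq := sq_sqrt (show 0 ≤ 1 / 4 - K by linarith)
  have hle : √(1 / 4 - K) ≤ 1 / 2 - p := sqrt_le_iff.2 ⟨by linarith, by nlinarith⟩
  exact ⟨1 / 2 - √(1 / 4 - K), by linarith, by linarith [sqrt_nonneg (1 / 4 - K)],
    by nlinarith⟩

theorem centeredBernoulliCGF_le_of_le_half {p K : ℝ} (hp0 : 0 < p) (hp : p ≤ 1 / 2)
    (hK₁ : p * (1 - p) ≤ K) (hK₂ : K ≤ 1 / 4) (hK : K * (2 * log ((1 - p) / p)) = 1 - 2 * p)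
    (y : ℝ) : centeredBernoulliCGF p y ≤ y ^ 2 * K / 2 := by
  have hp1 : p < 1 := by linarith
  set u := tiltedMean p
  have hu : StrictMono u := strictMono_tiltedMean hp0 hp1
  obtain ⟨a, hpa, ha, haK⟩ := exists_le_mul_one_sub_eq hp hK₁ hK₂
  set y₁ := log ((1 - p) * a / (p * (1 - a)))
  set y₂ := log ((1 - p) * (1 - a) / (p * (1 - (1 - a))))
  set y₀ := 2 * log ((1 - p) / p)
  have hu₁ : u y₁ = a := tiltedMean_log hp0 hp1 (by linarith) (by linarith)
  have hu₂ : u y₂ = 1 - a := tiltedMean_log hp0 hp1 (by linarith) (by linarith)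
  have hu₀ : u y₀ = 1 - p := tiltedMean_two_mul_log hp0 hp1
  have hf : ∀ y, HasDerivAt (fun y ↦ y ^ 2 * K / 2 - centeredBernoulliCGF p y)
      (y * K - (u y - p)) y := fun y ↦ by
    refine (((hasDerivAt_pow 2 y).mul_const K).div_const 2).sub
      (hasDerivAt_centeredBernoulliCGF hp0.le hp1 y) |>.congr_deriv ?_
    ring
  have hf' : ∀ y, HasDerivAt (fun y ↦ y * K - (u y - p)) ((u y - a) * (u y - (1 - a))) y :=
    fun y ↦ by
      refine ((hasDerivAt_mul_const K).sub ((hasDerivAt_tiltedMean hp0.le hp1 y).sub_const p))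
        |>.congr_deriv ?_
      linear_combination -haK
  have key := nonneg_of_hasDerivAt_of_monotoneOn_antitoneOn_monotoneOn hf (x₀ := 0) (x₁ := y₀)
    (hu.le_iff_le.1 (by rwa [hu₁, show u 0 = p from tiltedMean_zero p]))
    (hu.le_iff_le.1 (by linarith))
    (monotoneOn_of_hasDerivAt_nonneg (convex_Iic y₁) (fun y _ ↦ hf' y) fun y hy ↦ by
      have : u y ≤ a := hu₁ ▸ hu.monotone hy
      exact mul_nonneg_of_nonpos_of_nonpos (by linarith) (by linarith))
    (antitoneOn_of_hasDerivAt_nonpos (convex_Icc y₁ y₂) (fun y _ ↦ hf' y) fun y hy ↦ by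
      have h₁ : a ≤ u y := hu₁ ▸ hu.monotone hy.1
      have h₂ : u y ≤ 1 - a := hu₂ ▸ hu.monotone hy.2
      exact mul_nonpos_of_nonneg_of_nonpos (by linarith) (by linarith))
    (monotoneOn_of_hasDerivAt_nonneg (convex_Ici y₂) (fun y _ ↦ hf' y) fun y hy ↦ by
      have : 1 - a ≤ u y := hu₂ ▸ hu.monotone hy
      exact mul_nonneg (by linarith) (by linarith))
    (by simp [centeredBernoulliCGF_zero]) (by simp [u, tiltedMean_zero])
    (le_of_eq (by
      rw [centeredBernoulliCGF_two_mul_log hp0 hp1]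
      linear_combination -y₀ / 2 * hK))
    (by rw [hu₀]; linear_combination hK) y
  linarith

theorem centeredBernoulliCGF_le {p K : ℝ} (hp0 : 0 < p) (hp1 : p < 1) (hK₁ : p * (1 - p) ≤ K)
    (hK₂ : K ≤ 1 / 4) (hK : K * (2 * log ((1 - p) / p)) = 1 - 2 * p) (y : ℝ) :
    centeredBernoulliCGF p y ≤ y ^ 2 * K / 2 := by
  rcases le_total p (1 / 2) with hp | hp
  · exact centeredBernoulliCGF_le_of_le_half hp0 hp hK₁ hK₂ hK y
  · have hK' : K * (2 * log ((1 - (1 - p)) / (1 - p))) = 1 - 2 * (1 - p) := by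
      rw [sub_sub_cancel, ← inv_div, log_inv]
      linarith
    have := centeredBernoulliCGF_le_of_le_half (sub_pos.2 hp1) (by linarith) (by linarith) hK₂ hK'
      (-y)
    rwa [centeredBernoulliCGF_one_sub hp0.le hp1, neg_sq] at this

theorem two_mul_sq_le_mul_log_sub_log {x : ℝ} (hx : |x| < 1) :
    2 * x ^ 2 ≤ x * (log (1 + x) - log (1 - x)) := by
  have h := le_hasSum ((hasSum_log_sub_log_of_abs_lt_one hx).mul_left x) 0 fun k _ ↦ by
    have : x * (2 * (1 / (2 * k + 1)) * x ^ (2 * k + 1)) =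
        2 / (2 * k + 1) * (x ^ (k + 1)) ^ 2 := by
      ring
    rw [this]
    positivity
  norm_num at h
  linarith

section KearnsSaul

variable {p : ℝ}

theorem kearnsSaul_half : kearnsSaul (1 / 2) = 1 / 4 := if_pos rfl

theorem kearnsSaul_mul_two_log (hp0 : 0 < p) (hp1 : p < 1) :
    kearnsSaul p * (2 * log ((1 - p) / p)) = 1 - 2 * p := by
  rw [kearnsSaul]
  split_ifs with hp
  · subst hp
    norm_num
  · have hq : 0 < 1 - p := sub_pos.2 hp1
    have hL : log (p / (1 - p)) ≠ 0 := by
      refine log_ne_zero.2 ⟨by positivity, fun h ↦ hp ?_, fun h ↦ ?_⟩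
      · rw [div_eq_one_iff_eq hq.ne'] at h
        linarith
      · linarith [div_pos hp0 hq]
    rw [← inv_div p, log_inv]
    field_simp
    ring

theorem mul_one_sub_le_kearnsSaul (hp0 : 0 < p) (hp1 : p < 1) : p * (1 - p) ≤ kearnsSaul p := by
  rcases eq_or_ne p (1 / 2) with rfl | hp
  · norm_num [kearnsSaul_half]
  have hK := kearnsSaul_mul_two_log hp0 hp1
  set L := log ((1 - p) / p)
  have hL : L ≠ 0 := fun h ↦ hp (by rw [h] at hK; linarith)
  have hsinh : 2 * p * (1 - p) * sinh L = 1 - 2 * p := by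
    have hq : 0 < 1 - p := sub_pos.2 hp1
    rw [sinh_eq, exp_neg, exp_log (by positivity)]
    field_simp
    ring
  have hLsinh : 0 ≤ L * (sinh L - L) := by
    rcases le_total 0 L with h | h
    · exact mul_nonneg h (sub_nonneg.2 (self_le_sinh_iff.2 h))
    · exact mul_nonneg_of_nonpos_of_nonpos h (sub_nonpos.2 (sinh_le_self_iff.2 h))
  have h : (kearnsSaul p - p * (1 - p)) * L ^ 2 = p * (1 - p) * (L * (sinh L - L)) := by
    linear_combination L / 2 * hK - L / 2 * hsinh
  have h' : 0 ≤ (kearnsSaul p - p * (1 - p)) * L ^ 2 :=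
    h ▸ mul_nonneg (mul_pos hp0 (sub_pos.2 hp1)).le hLsinh
  linarith [(mul_nonneg_iff_of_pos_right (by positivity)).1 h']

theorem kearnsSaul_le_one_quarter (hp0 : 0 < p) (hp1 : p < 1) : kearnsSaul p ≤ 1 / 4 := by
  rcases eq_or_ne p (1 / 2) with rfl | hp
  · norm_num [kearnsSaul_half]
  have hK := kearnsSaul_mul_two_log hp0 hp1
  set L := log ((1 - p) / p)
  have hL : L ≠ 0 := fun h ↦ hp (by rw [h] at hK; linarith)
  have hlog : 2 * (1 - 2 * p) ^ 2 ≤ (1 - 2 * p) * L := by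
    have h := two_mul_sq_le_mul_log_sub_log (x := 1 - 2 * p)
      (abs_lt.2 ⟨by linarith, by linarith⟩)
    rwa [← log_div (by linarith) (by linarith),
      show (1 + (1 - 2 * p)) / (1 - (1 - 2 * p)) = (1 - p) / p by field_simp; ring] at h
  have hKL : 0 < kearnsSaul p * L ^ 2 :=
    mul_pos ((mul_pos hp0 (sub_pos.2 hp1)).trans_le (mul_one_sub_le_kearnsSaul hp0 hp1))
      (by positivity)
  rw [← hK] at hlog
  nlinarith

end KearnsSaul

/-- Kearns–Saul inequality.  For every `p ∈ (0, 1)` and every `lam : ℝ`,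
`(1 - p) e^{-lam p} + p e^{lam (1 - p)} ≤ exp (lam² K(p) / 2)`. -/
theorem kearnsSaul_inequality (p : ℝ) (hp : p ∈ Set.Ioo (0 : ℝ) 1) (lam : ℝ) :
    (1 - p) * Real.exp (-lam * p) + p * Real.exp (lam * (1 - p)) ≤
      Real.exp (lam ^ 2 * kearnsSaul p / 2) := by
  obtain ⟨hp0, hp1⟩ := hp
  rw [← exp_centeredBernoulliCGF hp0.le hp1, exp_le_exp]
  exact centeredBernoulliCGF_le hp0 hp1 (mul_one_sub_le_kearnsSaul hp0 hp1)
    (kearnsSaul_le_one_quarter hp0 hp1) (kearnsSaul_mul_two_log hp0 hp1) lam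
end

section
/- Let (Ω, F, (F_t)_{t∈ℕ}, P) be a filtered probability space, (Y_t)_{t≥1} an adapted nonnegative integrable real-valued process, (Ŷ_t)_{t≥1} a predictable process with values in [0, 1], and λ ∈ [0, 1) fixed. Then 1 + λ(Y_s − Ŷ_s) ≥ 1 − λ > 0 almost surely for every s, and the process E_t(λ) = exp( λ Σ_{s≤t} (Ŷ_s − E[Y_s | F_{s−1}]) + Σ_{s≤t} log(1 + λ(Y_s − Ŷ_s)) ), with E_0(λ) = 1, is a nonnegative supermartingale; in particular E[E_t(λ)] ≤ 1 for all t. -/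
open MeasureTheory

/-!
Write `G t = exp (λ (Ŷ_{t+1} - E[Y_{t+1} | ℱ_t]))`, which is `ℱ_t`-measurable, and
`Z s = 1 + λ (Y_s - Ŷ_s) ≥ 1 - λ > 0`. Then `E (t + 1) = E t * G t * Z (t + 1)`, and with
`x = λ (E[Y_{t+1} | ℱ_t] - Ŷ_{t+1})` predictability of `Ŷ` gives `E[Z (t + 1) | ℱ_t] = 1 + x`
and `G t = exp (-x)`, so `1 + x ≤ exp x` yields `E[G t * Z (t + 1) | ℱ_t] ≤ 1`.
Integrability of `E (t + 1)` is not automatic, since `E t * G t` is unbounded; it follows from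
the pull-out identity for nonnegative functions, which holds for lower Lebesgue integrals
unconditionally.
-/

section PullOut

variable {Ω : Type*} {m m0 : MeasurableSpace Ω} {μ : Measure Ω} {f g : Ω → ℝ}

/-- No integrability of `f * g` is needed: both sides integrate `f` against the measures with
densities `g` and `μ[g|m]`, which agree on `m`. -/
theorem lintegral_ofReal_mul_condExp (hm : m ≤ m0) [SigmaFinite (μ.trim hm)]
    (hf : Measurable[m] f) (hf0 : 0 ≤ f) (hg : Integrable g μ) (hg0 : 0 ≤ᵐ[μ] g) :
    ∫⁻ ω, ENNReal.ofReal (f ω * (μ[g|m]) ω) ∂μ =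
      ∫⁻ ω, ENNReal.ofReal (f ω * g ω) ∂μ := by
  have hdensity : ∀ h : Ω → ℝ, AEMeasurable h μ →
      ∫⁻ ω, ENNReal.ofReal (f ω * h ω) ∂μ =
        ∫⁻ ω, ENNReal.ofReal (f ω)
          ∂(μ.withDensity fun ω => ENNReal.ofReal (h ω)).trim hm := by
    intro h hh
    rw [lintegral_trim hm hf.ennreal_ofReal,
      lintegral_withDensity_eq_lintegral_mul₀ hh.ennreal_ofReal
        (hf.mono hm le_rfl).ennreal_ofReal.aemeasurable]
    simp only [Pi.mul_apply, ENNReal.ofReal_mul (hf0 _), mul_comm]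
  have htrim : (μ.withDensity fun ω => ENNReal.ofReal ((μ[g|m]) ω)).trim hm =
      (μ.withDensity fun ω => ENNReal.ofReal (g ω)).trim hm := by
    refine @Measure.ext _ m _ _ fun s hs => ?_
    rw [trim_measurableSet_eq hm hs, trim_measurableSet_eq hm hs, withDensity_apply _ (hm s hs),
      withDensity_apply _ (hm s hs),
      ← ofReal_integral_eq_lintegral_ofReal integrable_condExp.restrict
        (ae_restrict_of_ae (condExp_nonneg hg0)),
      ← ofReal_integral_eq_lintegral_ofReal hg.restrict (ae_restrict_of_ae hg0),
      setIntegral_condExp hm hg hs]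
  rw [hdensity _ integrable_condExp.aemeasurable, hdensity _ hg.aemeasurable, htrim]

theorem Integrable.mul_of_integrable_mul_condExp (hm : m ≤ m0) [SigmaFinite (μ.trim hm)]
    (hf : Measurable[m] f) (hf0 : 0 ≤ f) (hg : Integrable g μ) (hg0 : 0 ≤ᵐ[μ] g)
    (hfg : Integrable (f * μ[g|m]) μ) : Integrable (f * g) μ := by
  refine ⟨(hf.mono hm le_rfl).aestronglyMeasurable.mul hg.1, ?_⟩
  have hfg0 : 0 ≤ᵐ[μ] f * μ[g|m] := by
    filter_upwards [condExp_nonneg (m := m) hg0] with ω hω using mul_nonneg (hf0 ω) hω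
  have hfg0' : 0 ≤ᵐ[μ] f * g := by
    filter_upwards [hg0] with ω hω using mul_nonneg (hf0 ω) hω
  have hfinite := (hasFiniteIntegral_iff_ofReal hfg0).1 hfg.2
  rw [hasFiniteIntegral_iff_ofReal hfg0']
  simpa only [Pi.mul_apply, lintegral_ofReal_mul_condExp hm hf hf0 hg hg0] using hfinite

end PullOut

section Multiplicative

variable {Ω : Type*} {m0 : MeasurableSpace Ω} {μ : Measure Ω} [IsFiniteMeasure μ]
  {ℱ : Filtration ℕ m0} {M G Z : ℕ → Ω → ℝ}

theorem supermartingale_of_succ_eq_mul (hM0 : Measurable[ℱ 0] (M 0))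
    (hM0int : Integrable (M 0) μ) (hM : 0 ≤ M) (hG : Adapted ℱ G) (hG0 : 0 ≤ G)
    (hZ : Adapted ℱ Z) (hZint : ∀ t, Integrable (Z t) μ) (hZ0 : 0 ≤ Z)
    (hsucc : ∀ t, M (t + 1) = M t * G t * Z (t + 1))
    (hGZ : ∀ t, G t * μ[Z (t + 1)|ℱ t] ≤ᵐ[μ] 1) :
    Supermartingale M ℱ μ := by
  have hadapted : Adapted ℱ M := by
    intro t
    induction t with
    | zero => exact hM0
    | succ t ih =>
      rw [hsucc]
      exact ((ih.mul (hG t)).mono (ℱ.mono t.le_succ) le_rfl).mul (hZ (t + 1))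
  have hstep : ∀ t, Integrable (M t) μ →
      Integrable (M (t + 1)) μ ∧ μ[M (t + 1)|ℱ t] ≤ᵐ[μ] M t := by
    intro t hint
    have hF : Measurable[ℱ t] (M t * G t) := (hadapted t).mul (hG t)
    have hF0 : 0 ≤ M t * G t := mul_nonneg (hM t) (hG0 t)
    have hbound : M t * G t * μ[Z (t + 1)|ℱ t] ≤ᵐ[μ] M t := by
      filter_upwards [hGZ t] with ω hω
      calc M t ω * G t ω * (μ[Z (t + 1)|ℱ t]) ω
          = M t ω * (G t ω * (μ[Z (t + 1)|ℱ t]) ω) := by ring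
        _ ≤ M t ω := mul_le_of_le_one_right (hM t ω) hω
    have hFcond : Integrable (M t * G t * μ[Z (t + 1)|ℱ t]) μ := by
      refine hint.mono' ((hF.mono (ℱ.le t) le_rfl).aestronglyMeasurable.mul
        integrable_condExp.1) ?_
      filter_upwards [hbound, condExp_nonneg (m := ℱ t) (ae_of_all μ (hZ0 (t + 1)))]
        with ω hle hnonneg
      exact (Real.norm_of_nonneg (mul_nonneg (hF0 ω) hnonneg)).trans_le hle
    have hFZ : Integrable (M t * G t * Z (t + 1)) μ :=
      Integrable.mul_of_integrable_mul_condExp (ℱ.le t) hF hF0 (hZint (t + 1))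
        (ae_of_all μ (hZ0 (t + 1))) hFcond
    rw [hsucc]
    exact ⟨hFZ, (condExp_mul_of_stronglyMeasurable_left hF.stronglyMeasurable hFZ
      (hZint (t + 1))).le.trans hbound⟩
  have hint : ∀ t, Integrable (M t) μ := fun t => by
    induction t with
    | zero => exact hM0int
    | succ t ih => exact (hstep t ih).1
  exact supermartingale_nat (fun t => (hadapted t).stronglyMeasurable) hint
    fun t => (hstep t (hint t)).2

end Multiplicative

theorem Real.exp_neg_mul_one_add_le_one (x : ℝ) : Real.exp (-x) * (1 + x) ≤ 1 := by
  calc Real.exp (-x) * (1 + x) ≤ Real.exp (-x) * Real.exp x := by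
        gcongr
        linarith [Real.add_one_le_exp x]
    _ = 1 := by rw [← Real.exp_add, neg_add_cancel, Real.exp_zero]

section Increment

variable {Ω : Type*} {m m0 : MeasurableSpace Ω} {μ : Measure Ω} [IsFiniteMeasure μ]
  {Y Ŷ : Ω → ℝ}

theorem condExp_one_add_mul_sub (hm : m ≤ m0) (c : ℝ) (hY : Integrable Y μ)
    (hŶ : StronglyMeasurable[m] Ŷ) (hŶint : Integrable Ŷ μ) :
    μ[fun ω => 1 + c * (Y ω - Ŷ ω)|m] =ᵐ[μ] fun ω => 1 + c * ((μ[Y|m]) ω - Ŷ ω) := by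
  have hsplit : (fun ω => 1 + c * (Y ω - Ŷ ω)) = c • Y + fun ω => 1 - c * Ŷ ω := by
    funext ω
    simp only [Pi.add_apply, Pi.smul_apply, smul_eq_mul]
    ring
  have hrest : StronglyMeasurable[m] fun ω => 1 - c * Ŷ ω :=
    stronglyMeasurable_const.sub (hŶ.const_mul c)
  have hrest_int : Integrable (fun ω => 1 - c * Ŷ ω) μ :=
    (integrable_const 1).sub (hŶint.const_mul c)
  rw [hsplit]
  filter_upwards [condExp_add (hY.smul c) hrest_int m, condExp_smul (m := m) c Y]
    with ω hadd hsmul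
  rw [hadd, Pi.add_apply, hsmul, condExp_of_stronglyMeasurable hm hrest hrest_int]
  simp only [Pi.smul_apply, smul_eq_mul]
  ring

theorem ae_exp_mul_sub_condExp_mul_condExp_le_one (hm : m ≤ m0) (c : ℝ)
    (hY : Integrable Y μ) (hŶ : StronglyMeasurable[m] Ŷ) (hŶint : Integrable Ŷ μ) :
    ∀ᵐ ω ∂μ, Real.exp (c * (Ŷ ω - (μ[Y|m]) ω)) *
      (μ[fun ω => 1 + c * (Y ω - Ŷ ω)|m]) ω ≤ 1 := by
  filter_upwards [condExp_one_add_mul_sub hm c hY hŶ hŶint] with ω hω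
  rw [hω, show c * (Ŷ ω - (μ[Y|m]) ω) = -(c * ((μ[Y|m]) ω - Ŷ ω)) by ring]
  exact Real.exp_neg_mul_one_add_le_one _

end Increment

theorem Real.exp_mul_sum_add_sum_log_Icc_succ (lam : ℝ) (a z : ℕ → ℝ) (t : ℕ)
    (hz : 0 < z (t + 1)) :
    Real.exp (lam * ∑ s ∈ Finset.Icc 1 (t + 1), a s +
        ∑ s ∈ Finset.Icc 1 (t + 1), Real.log (z s)) =
      Real.exp (lam * ∑ s ∈ Finset.Icc 1 t, a s + ∑ s ∈ Finset.Icc 1 t, Real.log (z s)) *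
        Real.exp (lam * a (t + 1)) * z (t + 1) := by
  rw [Finset.sum_Icc_succ_top (by omega), Finset.sum_Icc_succ_top (by omega),
    ← Real.exp_log hz, ← Real.exp_add, ← Real.exp_add, Real.log_exp]
  ring_nf

/-- the importance-weighted test supermartingale.  For an adapted
nonnegative integrable process `Y`, a predictable `[0,1]`-valued process `Ŷ`, and a fixed
bet `lam ∈ [0, 1)`, one has `1 + lam (Y_s - Ŷ_s) ≥ 1 - lam > 0`, and the process
`E_t = exp (lam ∑_{s ≤ t} (Ŷ_s - E[Y_s | ℱ_{s-1}]) + ∑_{s ≤ t} log (1 + lam (Y_s - Ŷ_s)))`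
(with `E 0 = 1`) is a nonnegative supermartingale; in particular `E[E_t] ≤ 1` for all `t`. -/
theorem iw_test_supermartingale {Ω : Type*} {m0 : MeasurableSpace Ω} (μ : Measure Ω)
    [IsProbabilityMeasure μ] (ℱ : Filtration ℕ m0)
    (Y : ℕ → Ω → ℝ) (hYadapted : Adapted ℱ Y) (hYnonneg : ∀ s ω, 0 ≤ Y s ω)
    (hYint : ∀ s, Integrable (Y s) μ)
    (Yhat : ℕ → Ω → ℝ) (hYhat01 : ∀ s ω, Yhat s ω ∈ Set.Icc (0 : ℝ) 1)
    (hYhatpred : ∀ s, StronglyMeasurable[ℱ (s - 1)] (Yhat s))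
    (lam : ℝ) (hlam : lam ∈ Set.Ico (0 : ℝ) 1)
    (E : ℕ → Ω → ℝ)
    (hE : ∀ t ω, E t ω =
      Real.exp (lam * ∑ s ∈ Finset.Icc 1 t, (Yhat s ω - (μ[Y s | ℱ (s - 1)]) ω) +
        ∑ s ∈ Finset.Icc 1 t, Real.log (1 + lam * (Y s ω - Yhat s ω)))) :
    (0 < 1 - lam) ∧
    (∀ s ω, 1 - lam ≤ 1 + lam * (Y s ω - Yhat s ω)) ∧
    (∀ t ω, 0 ≤ E t ω) ∧ (∀ ω, E 0 ω = 1) ∧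
    Supermartingale E ℱ μ ∧
    (∀ t, ∫ ω, E t ω ∂μ ≤ 1) := by
  obtain ⟨hlam0, hlam1⟩ := hlam
  have hZ_ge : ∀ s ω, 1 - lam ≤ 1 + lam * (Y s ω - Yhat s ω) := fun s ω => by
    nlinarith [hYnonneg s ω, (hYhat01 s ω).2]
  have hZ_pos : ∀ s ω, 0 < 1 + lam * (Y s ω - Yhat s ω) := fun s ω =>
    (sub_pos.2 hlam1).trans_le (hZ_ge s ω)
  have hE_nonneg : ∀ t ω, 0 ≤ E t ω := fun t ω => (hE t ω).symm ▸ (Real.exp_pos _).le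
  have hE_zero : E 0 = 1 := funext fun ω => by simp [hE]
  have hYhat_int : ∀ s, Integrable (Yhat s) μ := fun s =>
    .of_mem_Icc 0 1 ((hYhatpred s).measurable.mono (ℱ.le _) le_rfl).aemeasurable
      (ae_of_all μ (hYhat01 s))
  set G : ℕ → Ω → ℝ := fun t ω =>
    Real.exp (lam * (Yhat (t + 1) ω - (μ[Y (t + 1)|ℱ t]) ω))
  set Z : ℕ → Ω → ℝ := fun s ω => 1 + lam * (Y s ω - Yhat s ω)
  have hG : Adapted ℱ G := fun t =>
    (((hYhatpred (t + 1)).measurable.sub stronglyMeasurable_condExp.measurable).const_mul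
      lam).exp
  have hZ : Adapted ℱ Z := fun s =>
    (((hYadapted s).sub ((hYhatpred s).measurable.mono (ℱ.mono (s.sub_le 1)) le_rfl)).const_mul
      lam).const_add 1
  have hsucc : ∀ t, E (t + 1) = E t * G t * Z (t + 1) := fun t => funext fun ω => by
    simp only [Pi.mul_apply, hE]
    exact Real.exp_mul_sum_add_sum_log_Icc_succ lam _ _ t (hZ_pos (t + 1) ω)
  have hsuper : Supermartingale E ℱ μ :=
    supermartingale_of_succ_eq_mul (by rw [hE_zero]; exact measurable_const)
      (by rw [hE_zero]; exact integrable_const 1) (fun t ω => hE_nonneg t ω) hG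
      (fun t ω => (Real.exp_pos _).le) hZ
      (fun s => (integrable_const 1).add (((hYint s).sub (hYhat_int s)).const_mul lam))
      (fun s ω => (hZ_pos s ω).le) hsucc
      fun t => ae_exp_mul_sub_condExp_mul_condExp_le_one (ℱ.le t) lam (hYint (t + 1))
        (hYhatpred (t + 1)) (hYhat_int (t + 1))
  refine ⟨sub_pos.2 hlam1, hZ_ge, hE_nonneg, congrFun hE_zero, hsuper, fun t => ?_⟩
  simpa [hE_zero] using hsuper.setIntegral_le t.zero_le MeasurableSet.univ
end
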